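/- Define sequences by α_0 = 1, λ_0 = 1, and for t ≥ 1: α_t = sqrt(λ_{t-1} + λ_{t-1}²/4) − λ_{t-1}/2 and λ_t = λ_{t-1}(1 − α_t). Then α_t ≤ 2/(t+2) for all t ≥ 1. -/
import Mathlib


theorem alpha_le (α lam : ℕ → ℝ)
    (hα0 : α 0 = 1) (hlam0 : lam 0 = 1)
    (hα : ∀ t : ℕ, 1 ≤ t →
      α t = Real.sqrt (lam (t - 1) + (lam (t - 1)) ^ 2 / 4) - lam (t - 1) / 2)
    (hlam : ∀ t : ℕ, 1 ≤ t → lam t = lam (t - 1) * (1 - α t)) :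
    ∀ t : ℕ, 1 ≤ t → α t ≤ 2 / ((t : ℝ) + 2) := by
  have key : ∀ t : ℕ, 0 < α t ∧ α t ≤ 2 / ((t : ℝ) + 2) ∧ lam t = (α t) ^ 2 := by
    intro t
    induction t with
    | zero => refine ⟨by simp [hα0], by norm_num [hα0], by simp [hα0, hlam0]⟩
    | succ n ih =>
      obtain ⟨hpos, hbd, hlm⟩ := ih
      set L := lam n with hL
      have hLpos : 0 < L := by rw [hlm]; positivity
      have hαn : α (n + 1) = Real.sqrt (L + L ^ 2 / 4) - L / 2 := by
        simpa using hα (n + 1) (by omega)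
      have hlamn : lam (n + 1) = L * (1 - α (n + 1)) := by
        simpa using hlam (n + 1) (by omega)
      set s := Real.sqrt (L + L ^ 2 / 4) with hs
      have hsnn : 0 ≤ s := Real.sqrt_nonneg _
      have hs2 : s ^ 2 = L + L ^ 2 / 4 := by
        rw [hs, Real.sq_sqrt]; positivity
      have hspos : L / 2 < s := by nlinarith
      have hapos : 0 < α (n + 1) := by rw [hαn]; linarith
      have hquad : (α (n + 1)) ^ 2 = L * (1 - α (n + 1)) := by
        rw [hαn]; nlinarith
      have hc : (0:ℝ) ≤ (n:ℝ) := Nat.cast_nonneg n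
      have hLle : L * ((n:ℝ) + 2) ^ 2 ≤ 4 := by
        have h1 : α n * ((n:ℝ) + 2) ≤ 2 := by
          have := (le_div_iff₀ (show (0:ℝ) < (n:ℝ)+2 by linarith)).mp hbd
          linarith
        have h3 : 0 ≤ α n * ((n:ℝ)+2) :=
          mul_nonneg hpos.le (by linarith)
        calc L * ((n:ℝ) + 2) ^ 2 = (α n * ((n:ℝ)+2))^2 := by rw [hlm]; ring
          _ ≤ 2^2 := by nlinarith
          _ = 4 := by norm_num
      have hbd' : α (n + 1) ≤ 2 / ((n:ℝ) + 3) := by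
        by_contra h
        push_neg at h
        have h2 : α (n + 1) * ((n:ℝ) + 3) > 2 := by
          have := (div_lt_iff₀ (show (0:ℝ) < (n:ℝ)+3 by linarith)).mp h
          linarith
        nlinarith [sq_nonneg (α (n+1) * ((n:ℝ)+3) - 2), hquad, hLle, hLpos.le, hapos.le]
      refine ⟨hapos, ?_, by rw [hlamn, hquad]⟩
      · push_cast
        convert hbd' using 2
        ring
  intro t _
  exact (key t).2.1
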